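/- Convergence in the Skorokhod $J_1$ metric implies convergence in the metric $d_\lambda$: if $x_n \to x$ in the $J_1$ metric on $D[0,T]$ (i.e., there exist increasing homeomorphisms $f_n$ of $[0,T]$ with $\|x_n - x \circ f_n\| \to 0$ and $\|\mathrm{Id} - f_n\| \to 0$), then $d_\lambda(x_n, x) \to 0$. -/
import Mathlib


open MeasureTheory Set Filter
open Topology

/-- A real function is càdlàg on `[0,T]`: right-continuous on `[0,T)` and with left
limits on `(0,T]`. -/
def IsCadlagOn (x : ℝ → ℝ) (T : ℝ) : Prop :=
  (∀ t ∈ Set.Ico (0 : ℝ) T, Tendsto x (nhdsWithin t (Set.Ici t)) (nhds (x t))) ∧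
  (∀ t ∈ Set.Ioc (0 : ℝ) T, ∃ L : ℝ, Tendsto x (nhdsWithin t (Set.Iio t)) (nhds L))

/-- A Skorokhod reparameterisation of time on `[0,T]`: a strictly increasing continuous
map of `[0,T]` onto itself (hence with continuous inverse). -/
def IsSRT (T : ℝ) (f : ℝ → ℝ) : Prop :=
  StrictMonoOn f (Set.Icc 0 T) ∧ ContinuousOn f (Set.Icc 0 T) ∧
    f 0 = 0 ∧ f T = T ∧ Set.MapsTo f (Set.Icc 0 T) (Set.Icc 0 T)

/-- Membership in `𝓘`: a finite union of half-open intervals `[a,b) ⊆ [0,T]`. -/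
def IsFinUnionIco (T : ℝ) (A : Set ℝ) : Prop :=
  ∃ s : Finset (ℝ × ℝ), (∀ p ∈ s, 0 ≤ p.1 ∧ p.1 < p.2 ∧ p.2 ≤ T) ∧
    A = ⋃ p ∈ s, Set.Ico p.1 p.2

/-- The uniform norm of a function over `[0,T]`. -/
noncomputable def unifNorm (T : ℝ) (y : ℝ → ℝ) : ℝ := ⨆ t : Set.Icc (0 : ℝ) T, |y t|

/-- The modified Skorokhod metric
`d_λ(x₁,x₂) = inf_{A ∈ 𝓘, f ∈ 𝓕} ‖𝟙_A (x₁ - x₂∘f)‖ ∨ ‖Id - f‖ ∨ λ([0,T]∖A) ∨ |x₁(T)-x₂(T)|`. -/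
noncomputable def dLambda (T : ℝ) (x₁ x₂ : ℝ → ℝ) : ℝ :=
  sInf { d : ℝ | ∃ A : Set ℝ, ∃ f : ℝ → ℝ, IsFinUnionIco T A ∧ IsSRT T f ∧
    d = max (max (unifNorm T (Set.indicator A fun t => x₁ t - x₂ (f t)))
              (unifNorm T fun t => t - f t))
          (max ((volume (Set.Icc (0 : ℝ) T \ A)).toReal) |x₁ T - x₂ T|) }

lemma cadlag_bdd {x : ℝ → ℝ} {T : ℝ} (hT : 0 ≤ T) (hx : IsCadlagOn x T) :
    ∃ M : ℝ, ∀ t ∈ Set.Icc 0 T, |x t| ≤ M := by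
  have hc : IsCompact (Set.Icc (0:ℝ) T) := isCompact_Icc
  refine hc.induction_on (p := fun U => ∃ M : ℝ, ∀ t ∈ U, |x t| ≤ M)
    ⟨0, by simp⟩ (fun s t hst ⟨M, hM⟩ => ⟨M, fun u hu => hM u (hst hu)⟩)
    (fun s t ⟨M₁, h₁⟩ ⟨M₂, h₂⟩ => ⟨max M₁ M₂, fun u hu => hu.elim
      (fun h => (h₁ u h).trans (le_max_left _ _))
      (fun h => (h₂ u h).trans (le_max_right _ _))⟩) ?_
  intro t ht
  -- right part
  have hright : ∃ M₁ : ℝ, ∀ᶠ s in 𝓝[Set.Icc 0 T ∩ Set.Ici t] t, |x s| ≤ M₁ := by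
    rcases lt_or_eq_of_le ht.2 with hlt | heq
    · refine ⟨|x t| + 1, ?_⟩
      have hcont := hx.1 t ⟨ht.1, hlt⟩
      have h := hcont (Metric.ball_mem_nhds (x t) one_pos)
      have h' : ∀ᶠ s in 𝓝[Set.Ici t] t, |x s| ≤ |x t| + 1 := by
        filter_upwards [h] with s hs
        have : |x s - x t| < 1 := by simpa [Real.dist_eq] using hs
        calc |x s| ≤ |x s - x t| + |x t| := by
              simpa using abs_add_le (x s - x t) (x t)
          _ ≤ |x t| + 1 := by linarith
      exact nhdsWithin_mono t inter_subset_right h'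
    · refine ⟨|x T|, eventually_of_mem self_mem_nhdsWithin ?_⟩
      intro s hs
      have : s = T := le_antisymm hs.1.2 (heq ▸ hs.2)
      simp [this]
  -- left part
  have hleft : ∃ M₂ : ℝ, ∀ᶠ s in 𝓝[Set.Icc 0 T ∩ Set.Iio t] t, |x s| ≤ M₂ := by
    rcases lt_or_eq_of_le ht.1 with hlt | heq
    · obtain ⟨L, hL⟩ := hx.2 t ⟨hlt, ht.2⟩
      refine ⟨|L| + 1, ?_⟩
      have h := hL (Metric.ball_mem_nhds L one_pos)
      have h' : ∀ᶠ s in 𝓝[Set.Iio t] t, |x s| ≤ |L| + 1 := by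
        filter_upwards [h] with s hs
        have : |x s - L| < 1 := by simpa [Real.dist_eq] using hs
        calc |x s| ≤ |x s - L| + |L| := by simpa using abs_add_le (x s - L) L
          _ ≤ |L| + 1 := by linarith
      exact nhdsWithin_mono t inter_subset_right h'
    · refine ⟨0, eventually_of_mem self_mem_nhdsWithin ?_⟩
      intro s hs
      exact absurd (lt_of_le_of_lt hs.1.1 hs.2) (by simp [← heq])
  obtain ⟨M₁, h₁⟩ := hright
  obtain ⟨M₂, h₂⟩ := hleft
  have hsub : Set.Icc (0:ℝ) T ⊆ (Set.Icc 0 T ∩ Set.Ici t) ∪ (Set.Icc 0 T ∩ Set.Iio t) := by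
    intro s hs
    rcases le_or_gt t s with h | h
    · exact Or.inl ⟨hs, h⟩
    · exact Or.inr ⟨hs, h⟩
  have hle : 𝓝[Set.Icc (0:ℝ) T] t ≤
      𝓝[Set.Icc 0 T ∩ Set.Ici t] t ⊔ 𝓝[Set.Icc 0 T ∩ Set.Iio t] t := by
    rw [← nhdsWithin_union]
    exact nhdsWithin_mono t hsub
  have hev : ∀ᶠ s in 𝓝[Set.Icc (0:ℝ) T] t, |x s| ≤ max M₁ M₂ := by
    apply hle
    rw [mem_sup]
    exact ⟨h₁.mono fun s hs => hs.trans (le_max_left _ _),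
      h₂.mono fun s hs => hs.trans (le_max_right _ _)⟩
  exact ⟨{s | |x s| ≤ max M₁ M₂}, hev, ⟨max M₁ M₂, fun u hu => hu⟩⟩

/-- Convergence in the Skorokhod `J₁` metric implies convergence in the
metric `d_λ`: if there are time changes `f_n ∈ 𝓕` with `‖x_n - x∘f_n‖ → 0` and
`‖Id - f_n‖ → 0`, then `d_λ(x_n, x) → 0`. -/
theorem J1_tendsto_implies_dLambda_tendsto (T : ℝ) (hT : 0 < T)
    (xs : ℕ → ℝ → ℝ) (x : ℝ → ℝ)
    (hxs : ∀ n, IsCadlagOn (xs n) T) (hx : IsCadlagOn x T)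
    (f : ℕ → ℝ → ℝ) (hf : ∀ n, IsSRT T (f n))
    (hJ1 : Tendsto (fun n => unifNorm T fun t => xs n t - x (f n t)) atTop (nhds 0))
    (hId : Tendsto (fun n => unifNorm T fun t => t - f n t) atTop (nhds 0)) :
    Tendsto (fun n => dLambda T (xs n) x) atTop (nhds 0) := by
  haveI : Nonempty (Set.Icc (0:ℝ) T) := ⟨⟨0, le_refl _, hT.le⟩⟩
  obtain ⟨Mx, hMx⟩ := cadlag_bdd hT.le hx
  -- the chosen set A = [0,T)
  set A : Set ℝ := Set.Ico 0 T with hA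
  have hAI : IsFinUnionIco T A := by
    refine ⟨{(0, T)}, ?_, ?_⟩
    · intro p hp; simp only [Finset.mem_singleton] at hp; subst hp
      exact ⟨le_refl _, hT, le_refl _⟩
    · simp [hA]
  have hvol : (volume (Set.Icc (0 : ℝ) T \ A)).toReal = 0 := by
    rw [hA, Set.Icc_diff_Ico_same hT.le]
    simp
  -- nonnegativity of dLambda
  have hnonneg : ∀ n, 0 ≤ dLambda T (xs n) x := by
    intro n
    apply Real.sInf_nonneg
    rintro d ⟨B, g, _, _, rfl⟩
    have : (0:ℝ) ≤ max ((volume (Set.Icc (0 : ℝ) T \ B)).toReal) |xs n T - x T| :=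
      le_max_of_le_left ENNReal.toReal_nonneg
    exact this.trans (le_max_right _ _)
  -- upper bound
  have hub : ∀ n, dLambda T (xs n) x ≤
      max (unifNorm T fun t => xs n t - x (f n t)) (unifNorm T fun t => t - f n t) := by
    intro n
    obtain ⟨Mn, hMn⟩ := cadlag_bdd hT.le (hxs n)
    set g : ℝ → ℝ := fun t => xs n t - x (f n t) with hg
    have hgb : ∀ t : Set.Icc (0:ℝ) T, |g t| ≤ Mn + Mx := by
      intro ⟨t, ht⟩
      have h1 := hMn t ht
      have h2 := hMx (f n t) ((hf n).2.2.2.2 ht)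
      calc |g t| ≤ |xs n t| + |x (f n t)| := abs_sub _ _
        _ ≤ Mn + Mx := add_le_add h1 h2
    have hbdd : BddAbove (Set.range fun t : Set.Icc (0:ℝ) T => |g t|) := by
      refine ⟨Mn + Mx, ?_⟩
      rintro r ⟨t, rfl⟩
      exact hgb t
    have hmem : ∀ t : Set.Icc (0:ℝ) T, |g t| ≤ unifNorm T g := fun t =>
      le_ciSup hbdd t
    have hind : unifNorm T (Set.indicator A g) ≤ unifNorm T g := by
      apply ciSup_le
      intro t
      by_cases ht : (t:ℝ) ∈ A
      · rw [Set.indicator_of_mem ht]; exact hmem t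
      · rw [Set.indicator_of_notMem ht]
        simpa using (abs_nonneg _).trans (hmem t)
    have hc : |xs n T - x T| ≤ unifNorm T g := by
      have hfT : f n T = T := (hf n).2.2.2.1
      have := hmem ⟨T, hT.le, le_refl T⟩
      simpa [hg, hfT] using this
    have hmemset : (max (max (unifNorm T (Set.indicator A fun t => xs n t - x (f n t)))
              (unifNorm T fun t => t - f n t))
          (max ((volume (Set.Icc (0 : ℝ) T \ A)).toReal) |xs n T - x T|)) ∈
        { d : ℝ | ∃ B : Set ℝ, ∃ k : ℝ → ℝ, IsFinUnionIco T B ∧ IsSRT T k ∧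
          d = max (max (unifNorm T (Set.indicator B fun t => xs n t - x (k t)))
                (unifNorm T fun t => t - k t))
              (max ((volume (Set.Icc (0 : ℝ) T \ B)).toReal) |xs n T - x T|) } :=
      ⟨A, f n, hAI, hf n, rfl⟩
    have hbddb : BddBelow { d : ℝ | ∃ B : Set ℝ, ∃ k : ℝ → ℝ, IsFinUnionIco T B ∧ IsSRT T k ∧
          d = max (max (unifNorm T (Set.indicator B fun t => xs n t - x (k t)))
                (unifNorm T fun t => t - k t))
              (max ((volume (Set.Icc (0 : ℝ) T \ B)).toReal) |xs n T - x T|) } := by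
      refine ⟨0, ?_⟩
      rintro d ⟨B, k, _, _, rfl⟩
      have : (0:ℝ) ≤ max ((volume (Set.Icc (0 : ℝ) T \ B)).toReal) |xs n T - x T| :=
        le_max_of_le_left ENNReal.toReal_nonneg
      exact this.trans (le_max_right _ _)
    calc dLambda T (xs n) x ≤ _ := csInf_le hbddb hmemset
      _ ≤ max (unifNorm T g) (unifNorm T fun t => t - f n t) := by
        rw [hvol]
        apply max_le
        · exact max_le (hind.trans (le_max_left _ _)) (le_max_right _ _)
        · apply max_le
          · exact le_max_of_le_left ((abs_nonneg _).trans (hmem ⟨0, le_refl _, hT.le⟩))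
          · exact le_max_of_le_left hc
  have hmax : Tendsto (fun n => max (unifNorm T fun t => xs n t - x (f n t))
      (unifNorm T fun t => t - f n t)) atTop (nhds 0) := by
    have := hJ1.max hId
    simpa using this
  exact squeeze_zero hnonneg hub hmax
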